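/- arXiv:2001.07978 — 2 statements merged into one kernel-verified Lean document; each statement's English description precedes it below -/
import Mathlib

section
/- Let n ≥ 1. The ring homomorphism ℤ[t_1, …, t_n] → ℤ[X] sending every variable t_i to X descends to a ring isomorphism from the quotient ℤ[t_1, …, t_n]/J onto ℤ[X]/I_n, where J is the ideal generated by the elementary symmetric polynomials e_1, …, e_n in t_1, …, t_n together with all differences t_i − t_j (1 ≤ i < j ≤ n), and I_n ⊆ ℤ[X] is the ideal generated by {C(n,r)·X^r : 1 ≤ r ≤ n}. -/
open Polynomial

/-- `In n` is the ideal of `ℤ[X]` generated by `{C(n,r)·X^r : 1 ≤ r ≤ n}`. -/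
noncomputable def In (n : ℕ) : Ideal (Polynomial ℤ) :=
  Ideal.span {p : Polynomial ℤ | ∃ r : ℕ, 1 ≤ r ∧ r ≤ n ∧ p = (n.choose r : ℤ) • X ^ r}

/-- The ideal `J` of `ℤ[t_1,…,t_n]` generated by the elementary symmetric polynomials
`e_1, …, e_n` together with all differences `t_i - t_j` for `i < j`. -/
noncomputable def Jn (n : ℕ) : Ideal (MvPolynomial (Fin n) ℤ) :=
  Ideal.span ({q : MvPolynomial (Fin n) ℤ | ∃ r : ℕ, 1 ≤ r ∧ r ≤ n ∧
      q = MvPolynomial.esymm (Fin n) ℤ r} ∪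
    {q : MvPolynomial (Fin n) ℤ | ∃ i j : Fin n, i < j ∧
      q = MvPolynomial.X i - MvPolynomial.X j})

/-
The substitution `f : tᵢ ↦ X` is surjective and its kernel is generated by the differences
`tᵢ - tⱼ`: modulo them every polynomial is congruent to a polynomial in `t₁` alone.
Since `f (e_r) = C(n,r) X^r`, the image of `J` is `I_n`, and `J ⊇ ker f` gives
`J = f⁻¹(I_n)`, so `f` induces `ℤ[t]/J ≃ ℤ[X]/I_n`.
-/

namespace MvPolynomial

variable {σ R : Type*} [CommRing R]

theorem sub_aeval_mem_of_X_sub_mem {I : Ideal (MvPolynomial σ R)} {v : σ → MvPolynomial σ R}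
    (h : ∀ i, X i - v i ∈ I) (q : MvPolynomial σ R) : q - aeval v q ∈ I := by
  have hcomp : (Ideal.Quotient.mkₐ R I).comp (aeval v) = Ideal.Quotient.mkₐ R I :=
    algHom_ext fun i => by
      simpa [Ideal.Quotient.mk_eq_mk_iff_sub_mem, ← sub_eq_neg_add] using I.neg_mem (h i)
  rw [← Ideal.Quotient.mk_eq_mk_iff_sub_mem]
  exact (DFunLike.congr_fun hcomp q).symm

theorem aeval_const_esymm [Fintype σ] {S : Type*} [CommRing S] [Algebra R S] (a : S) (r : ℕ) :
    aeval (fun _ : σ => a) (esymm σ R r) = (Fintype.card σ).choose r • a ^ r := by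
  simp only [esymm, map_sum, map_prod, aeval_X, Finset.prod_const]
  rw [Finset.sum_congr rfl fun s hs => by rw [(Finset.mem_powersetCard.mp hs).2],
    Finset.sum_const, Finset.card_powersetCard, Finset.card_univ]

theorem aeval_const_X_comp_aeval_X (i : σ) :
    (aeval fun _ : σ => (Polynomial.X : R[X])).comp (Polynomial.aeval (X i)) = AlgHom.id R R[X] :=
  Polynomial.algHom_ext (by simp)

theorem aeval_X_comp_aeval_const_X (i : σ) :
    (Polynomial.aeval (X i)).comp (aeval fun _ : σ => (Polynomial.X : R[X])) =
      aeval fun _ : σ => (X i : MvPolynomial σ R) :=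
  algHom_ext (by simp)

theorem aeval_const_X_surjective [Nonempty σ] :
    Function.Surjective (aeval (R := R) fun _ : σ => (Polynomial.X : R[X])) := fun p =>
  ⟨Polynomial.aeval (X (Classical.arbitrary σ)) p,
    DFunLike.congr_fun (aeval_const_X_comp_aeval_X _) p⟩

theorem ker_aeval_const_X_le [Nonempty σ] {I : Ideal (MvPolynomial σ R)}
    (h : ∀ i j, X i - X j ∈ I) :
    RingHom.ker (aeval fun _ : σ => (Polynomial.X : R[X])) ≤ I := by
  intro q hq
  obtain ⟨i⟩ := ‹Nonempty σ›
  have hsub := sub_aeval_mem_of_X_sub_mem (v := fun _ => X i) (fun j => h j i) q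
  rwa [← aeval_X_comp_aeval_const_X, AlgHom.comp_apply, (RingHom.mem_ker).mp hq, map_zero,
    sub_zero] at hsub

end MvPolynomial

theorem X_sub_X_mem_Jn {n : ℕ} (i j : Fin n) : MvPolynomial.X i - MvPolynomial.X j ∈ Jn n := by
  rcases lt_trichotomy i j with hij | rfl | hji
  · exact Ideal.subset_span (Or.inr ⟨i, j, hij, rfl⟩)
  · simp
  · simpa using (Jn n).neg_mem (Ideal.subset_span (Or.inr ⟨j, i, hji, rfl⟩))

theorem map_aeval_const_X_Jn (n : ℕ) :
    (Jn n).map (MvPolynomial.aeval fun _ : Fin n => (X : ℤ[X])) = In n := by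
  have himage (r : ℕ) :
      MvPolynomial.aeval (fun _ : Fin n => (X : ℤ[X])) (MvPolynomial.esymm (Fin n) ℤ r) =
        (n.choose r : ℤ) • X ^ r := by
    rw [MvPolynomial.aeval_const_esymm, Fintype.card_fin, natCast_zsmul]
  apply le_antisymm
  · rw [Jn, Ideal.map_span, Ideal.span_le]
    rintro _ ⟨_, ⟨r, hr1, hrn, rfl⟩ | ⟨i, j, -, rfl⟩, rfl⟩
    · exact Ideal.subset_span ⟨r, hr1, hrn, himage r⟩
    · simp
  · rw [In, Ideal.span_le]
    rintro _ ⟨r, hr1, hrn, rfl⟩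
    rw [← himage]
    exact Ideal.mem_map_of_mem _ (Ideal.subset_span (Or.inl ⟨r, hr1, hrn, rfl⟩))

theorem comap_aeval_const_X_In {n : ℕ} (hn : 1 ≤ n) :
    (In n).comap (MvPolynomial.aeval fun _ : Fin n => (X : ℤ[X])) = Jn n := by
  have : Nonempty (Fin n) := ⟨⟨0, hn⟩⟩
  rw [← map_aeval_const_X_Jn,
    Ideal.comap_map_of_surjective _ MvPolynomial.aeval_const_X_surjective,
    ← RingHom.ker_eq_comap_bot, sup_eq_left]
  exact MvPolynomial.ker_aeval_const_X_le X_sub_X_mem_Jn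

/-- The ring homomorphism `ℤ[t_1,…,t_n] → ℤ[X]` sending every `t_i` to `X` descends to a
ring isomorphism `ℤ[t_1,…,t_n]/J ≃ ℤ[X]/I_n`. -/
theorem quotient_esymm_diag_iso (n : ℕ) (hn : 1 ≤ n) :
    ∃ φ : (MvPolynomial (Fin n) ℤ ⧸ Jn n) ≃+* (Polynomial ℤ ⧸ In n),
      ∀ q : MvPolynomial (Fin n) ℤ,
        φ (Ideal.Quotient.mk (Jn n) q) =
          Ideal.Quotient.mk (In n)
            (MvPolynomial.aeval (fun _ : Fin n => (X : Polynomial ℤ)) q) := by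
  have : Nonempty (Fin n) := ⟨⟨0, hn⟩⟩
  let g := (Ideal.Quotient.mk (In n)).comp
    (MvPolynomial.aeval (R := ℤ) fun _ : Fin n => (X : ℤ[X])).toRingHom
  have hker : Jn n = RingHom.ker g := by
    rw [← RingHom.comap_ker, Ideal.mk_ker, AlgHom.toRingHom_eq_coe, Ideal.comap_coe,
      comap_aeval_const_X_In hn]
  have hsurj : Function.Surjective g :=
    Ideal.Quotient.mk_surjective.comp MvPolynomial.aeval_const_X_surjective
  exact ⟨(Ideal.quotEquivOfEq hker).trans (RingHom.quotientKerEquivOfSurjective hsurj),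
    fun q => rfl⟩
end

section
/- Let n ≥ 1, let 1 ≤ k ≤ n, let p be a prime, and set b_{n,k} := gcd{C(n,1), C(n,2), …, C(n,k)}. Then the p-adic valuation of b_{n,k} equals the number of integers s with 1 ≤ s ≤ v_p(n) and p^s > k, where v_p(n) is the p-adic valuation of n. Equivalently, b_{n,k} = ∏_{p prime} p^{#{s ≥ 1 : p^s ∣ n and p^s > k}}. -/
/-!
From `n * C(n-1, j-1) = C(n, j) * j` we get `v_p(C(n, j)) ≥ v_p(n) - v_p(j) ≥ v_p(n) - log_p k`
for every `1 ≤ j ≤ k`. The bound is attained at `j = p^t` with `t = min(v_p(n), log_p k)`: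
as `p^t ∣ n`, each base-`p` digit of `p^t - 1` equals the corresponding digit `p - 1` of `n - 1`,
so `C(n-1, p^t-1) ≡ 1 (mod p)` by Lucas' theorem. Hence `v_p(b_{n,k}) = v_p(n) - log_p k`, which
is the number of `s ≤ v_p(n)` with `p^s > k`.
-/

/-- `bnr n k = gcd {C(n,1), …, C(n,k)}`. -/
def bnr (n k : ℕ) : ℕ := (Finset.Icc 1 k).gcd (n.choose ·)

open Finset

namespace Nat

theorem mul_choose_pred_eq_choose_mul {n j : ℕ} (hj : j ≠ 0) (hjn : j ≤ n) :
    n * (n - 1).choose (j - 1) = n.choose j * j := by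
  obtain ⟨m, rfl⟩ := exists_eq_add_one_of_ne_zero (n := n) (by omega)
  obtain ⟨i, rfl⟩ := exists_eq_add_one_of_ne_zero hj
  exact add_one_mul_choose_eq m i

theorem factorization_choose_add_factorization {n j : ℕ} (hj : j ≠ 0) (hjn : j ≤ n) (p : ℕ) :
    (n.choose j).factorization p + j.factorization p =
      n.factorization p + ((n - 1).choose (j - 1)).factorization p := by
  have h := congrArg (fun m => m.factorization p) (mul_choose_pred_eq_choose_mul hj hjn)
  simp only [factorization_mul (by omega : n ≠ 0) (choose_pos (by omega : j - 1 ≤ n - 1)).ne',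
    factorization_mul (choose_pos hjn).ne' hj, Finsupp.add_apply] at h
  exact h.symm

theorem choose_pred_pred_pow_modEq_one {p : ℕ} (hp : p.Prime) {t n : ℕ} (hn : n ≠ 0)
    (ht : p ^ t ∣ n) : (n - 1).choose (p ^ t - 1) ≡ 1 [MOD p] := by
  induction t generalizing n with
  | zero => simp [ModEq.refl]
  | succ t ih =>
    have := Fact.mk hp
    obtain ⟨m, rfl⟩ := ht
    rw [pow_succ', mul_assoc] at hn ⊢
    have hm : p ^ t * m ≠ 0 := right_ne_zero_of_mul hn
    have hp1 := hp.one_le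
    have hdigit : ∀ a ≠ 0, p * a - 1 = p - 1 + p * (a - 1) := fun a ha => by
      rcases exists_eq_add_one_of_ne_zero ha with ⟨b, rfl⟩
      rw [mul_add, mul_one, add_tsub_cancel_right]; omega
    rw [hdigit _ hm, hdigit _ (pow_ne_zero _ hp.ne_zero)]
    calc (p - 1 + p * (p ^ t * m - 1)).choose (p - 1 + p * (p ^ t - 1))
        ≡ (p - 1).choose (p - 1) * (p ^ t * m - 1).choose (p ^ t - 1) [MOD p] := by
          have := Choose.choose_modEq_choose_mod_mul_choose_div_nat (p := p)
            (n := p - 1 + p * (p ^ t * m - 1)) (k := p - 1 + p * (p ^ t - 1))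
          simpa [add_mul_mod_self_left, add_mul_div_left _ _ hp.pos,
            mod_eq_of_lt (sub_lt hp.pos one_pos), div_eq_of_lt (sub_lt hp.pos one_pos)] using this
      _ = (p ^ t * m - 1).choose (p ^ t - 1) := by rw [choose_self, one_mul]
      _ ≡ 1 [MOD p] := ih hm (dvd_mul_right _ _)

theorem factorization_choose_prime_pow_of_dvd {p : ℕ} (hp : p.Prime) {t n : ℕ} (hn : n ≠ 0)
    (ht : p ^ t ∣ n) : (n.choose (p ^ t)).factorization p = n.factorization p - t := by
  have hndvd : ¬ p ∣ (n - 1).choose (p ^ t - 1) := by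
    have h := choose_pred_pred_pow_modEq_one hp hn ht
    rw [ModEq, mod_eq_of_lt hp.one_lt] at h
    omega
  have hpt : p ^ t ≠ 0 := pow_ne_zero t hp.ne_zero
  have h := factorization_choose_add_factorization hpt (le_of_dvd (by omega) ht) p
  rw [factorization_eq_zero_of_not_dvd hndvd, hp.factorization_pow, Finsupp.single_eq_same] at h
  omega

theorem filter_Icc_lt_pow_eq_Ioc {p k : ℕ} (hp : 1 < p) (hk : k ≠ 0) (u : ℕ) :
    {s ∈ Icc 1 u | k < p ^ s} = Ioc (log p k) u := by
  ext s
  simp only [mem_filter, mem_Icc, mem_Ioc, ← log_lt_iff_lt_pow hp hk]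
  omega

theorem filter_Icc_pow_dvd_eq_Icc {p n : ℕ} (hp : p.Prime) (hn : n ≠ 0) :
    {s ∈ Icc 1 n | p ^ s ∣ n} = Icc 1 (n.factorization p) := by
  ext s
  simp only [mem_filter, mem_Icc, hp.pow_dvd_iff_le_factorization hn]
  have := factorization_lt p hn
  omega

theorem prod_primeFactors_pow_factorization_of_dvd {d n : ℕ} (hn : n ≠ 0) (hd : d ∣ n) :
    ∏ p ∈ n.primeFactors, p ^ d.factorization p = d := by
  conv_rhs => rw [← prod_factorization_pow_eq_self (ne_zero_of_dvd_ne_zero hn hd)]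
  refine (Finsupp.prod_of_support_subset _ ?_ _ fun _ _ => pow_zero _).symm
  rw [support_factorization]
  exact primeFactors_mono hd hn

end Nat

open Nat

theorem bnr_dvd_self {n k : ℕ} (hk : k ≠ 0) : bnr n k ∣ n := by
  simpa [bnr] using gcd_dvd (f := (n.choose ·)) (mem_Icc.2 ⟨le_refl 1, one_le_iff_ne_zero.2 hk⟩)

theorem factorization_bnr {p n k : ℕ} (hp : p.Prime) (hk : k ≠ 0) (hkn : k ≤ n) :
    (bnr n k).factorization p = n.factorization p - log p k := by
  have hn : n ≠ 0 := by omega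
  have hchoose : ∀ j ∈ Icc 1 k, n.choose j ≠ 0 := fun j hj =>
    (choose_pos ((mem_Icc.1 hj).2.trans hkn)).ne'
  apply le_antisymm
  · set t := min (n.factorization p) (log p k)
    have ht : p ^ t ∈ Icc 1 k := mem_Icc.2
      ⟨one_le_pow _ _ hp.pos,
        (Nat.pow_le_pow_right hp.pos (min_le_right _ _)).trans (pow_log_le_self p hk)⟩
    have hdvd : p ^ (bnr n k).factorization p ∣ n.choose (p ^ t) :=
      (ordProj_dvd _ p).trans (gcd_dvd ht)
    rw [hp.pow_dvd_iff_le_factorization (hchoose _ ht),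
      factorization_choose_prime_pow_of_dvd hp hn
        ((hp.pow_dvd_iff_le_factorization hn).2 (min_le_left _ _))] at hdvd
    omega
  · rw [← hp.pow_dvd_iff_le_factorization (ne_zero_of_dvd_ne_zero hn (bnr_dvd_self hk))]
    refine dvd_gcd fun j hj => ?_
    obtain ⟨hj1, hjk⟩ := mem_Icc.1 hj
    have hvj : j.factorization p ≤ log p k :=
      le_log_of_pow_le hp.one_lt ((le_of_dvd hj1 (ordProj_dvd j p)).trans hjk)
    have := factorization_choose_add_factorization (by omega) (hjk.trans hkn) p
    rw [hp.pow_dvd_iff_le_factorization (hchoose j hj)]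
    omega

theorem bnr_factorization_general (n : ℕ) (k : ℕ) (hk1 : 1 ≤ k) (hkn : k ≤ n) :
    (∀ p : ℕ, p.Prime →
      (bnr n k).factorization p =
        ((Finset.Icc 1 (n.factorization p)).filter (fun s => k < p ^ s)).card) ∧
    bnr n k = ∏ p ∈ n.primeFactors,
        p ^ ((Finset.Icc 1 n).filter (fun s => p ^ s ∣ n ∧ k < p ^ s)).card := by
  have hk : k ≠ 0 := by omega
  have hn : n ≠ 0 := by omega
  have hval : ∀ p : ℕ, p.Prime →
      (bnr n k).factorization p = #{s ∈ Icc 1 (n.factorization p) | k < p ^ s} := fun p hp => by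
    rw [factorization_bnr hp hk hkn, filter_Icc_lt_pow_eq_Ioc hp.one_lt hk, card_Ioc]
  refine ⟨hval, ?_⟩
  conv_lhs => rw [← prod_primeFactors_pow_factorization_of_dvd hn (bnr_dvd_self hk)]
  refine prod_congr rfl fun p hpn => ?_
  have hp := prime_of_mem_primeFactors hpn
  rw [hval p hp, ← filter_Icc_pow_dvd_eq_Icc hp hn, filter_filter]

/-- The `p`-adic valuation of `b_{n,k}` is the number of integers `s` with
`1 ≤ s ≤ v_p(n)` and `p^s > k`; equivalently
`b_{n,k} = ∏_p p^{#{s ≥ 1 : p^s ∣ n ∧ p^s > k}}`. -/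
theorem bnr_factorization (n : ℕ) (hn : 1 ≤ n) (k : ℕ) (hk1 : 1 ≤ k) (hkn : k ≤ n) :
    (∀ p : ℕ, p.Prime →
      (bnr n k).factorization p =
        ((Finset.Icc 1 (n.factorization p)).filter (fun s => k < p ^ s)).card) ∧
    bnr n k = ∏ p ∈ n.primeFactors,
        p ^ ((Finset.Icc 1 n).filter (fun s => p ^ s ∣ n ∧ k < p ^ s)).card :=
  bnr_factorization_general n k hk1 hkn
end
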